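/- arXiv:2401.01958 — 3 statements merged into one kernel-verified Lean document; each statement's English description precedes it below -/
import Mathlib

section
/- For the Cantor measure P with variance V = 1/8, and for the optimal set of 2^k points on the constraint S_{2^k}, the correction term A(k) = (1/2^{k+1}) · Σ_{σ ∈ {1,2}^k} (a(σ) + 1/2^k)² equals (2^k + 1)/(2·4^k) + (3·9^k − 1)/(16·9^k), where the values a(σ) for σ ∈ {1,2}^k are exactly the numbers c/(2·3^k) with c ranging over the set C_k (C_0 = {1}, C_k = C_{k-1} ∪ (C_{k-1} + 4·3^{k-1})). -/
/-!
Prepending a letter `i` to a word `σ` gives `a(iσ) = T_i(a(σ))`. Hence sums over words of length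
`k + 1` split into the images of the sums over words of length `k` under `T_0 = x/3` and
`T_1 = x/3 + 2/3`, so `∑ a(σ)` and `∑ a(σ)²` obey first-order linear recursions in `k`, solved by
induction; expanding the square in the correction term reduces it to these two sums. Likewise the
set `A_{k+1}` of values `a(σ)` is `T_0(A_k) ∪ T_1(A_k)`, and `T_0`, `T_1` send `c/(2·3^k)` to `c/(2·3^{k+1})`
and `(c + 4·3^k)/(2·3^{k+1})`, which is the recursion defining `C_{k+1}`.
-/

/-- The two generating maps of the Cantor set: `T 0 = x/3`, `T 1 = x/3 + 2/3`. -/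
noncomputable def Tmap : Fin 2 → ℝ → ℝ := fun i x => if i = 0 then x / 3 else x / 3 + 2 / 3

/-- `T_σ = T_{σ₁} ∘ ⋯ ∘ T_{σ_k}` for a word `σ ∈ {1,2}^k`. -/
noncomputable def Tcomp {k : ℕ} (σ : Fin k → Fin 2) : ℝ → ℝ :=
  (List.ofFn σ).foldr (fun i g => Tmap i ∘ g) id

/-- `a(σ) = T_σ(1/2)`. -/
noncomputable def aWord {k : ℕ} (σ : Fin k → Fin 2) : ℝ := Tcomp σ (1 / 2)

/-- The sets `C k` from the paper: `C 0 = {1}`, `C (k+1) = C k ∪ (C k + 4·3^k)`. -/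
def paperC : ℕ → Finset ℕ
  | 0 => {1}
  | (k + 1) => paperC k ∪ (paperC k).image (· + 4 * 3 ^ k)

open Finset

@[simp]
lemma Tmap_zero (x : ℝ) : Tmap 0 x = x / 3 := by simp [Tmap]

@[simp]
lemma Tmap_one (x : ℝ) : Tmap 1 x = x / 3 + 2 / 3 := by simp [Tmap]

lemma aWord_cons {k : ℕ} (i : Fin 2) (σ : Fin k → Fin 2) :
    aWord (Fin.cons i σ) = Tmap i (aWord σ) := by
  simp [aWord, Tcomp, List.ofFn_succ]

lemma aWord_eq_Tmap_aWord_tail {k : ℕ} (σ : Fin (k + 1) → Fin 2) :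
    aWord σ = Tmap (σ 0) (aWord (Fin.tail σ)) := by
  rw [← aWord_cons, Fin.cons_self_tail]

lemma sum_comp_aWord_succ {M : Type*} [AddCommMonoid M] {k : ℕ} (g : ℝ → M) :
    ∑ σ : Fin (k + 1) → Fin 2, g (aWord σ)
      = ∑ τ : Fin k → Fin 2, g (aWord τ / 3) + ∑ τ : Fin k → Fin 2, g (aWord τ / 3 + 2 / 3) := by
  rw [← (Fin.consEquiv fun _ => Fin 2).sum_comp, Fintype.sum_prod_type, Fin.sum_univ_two]
  simp [Fin.consEquiv, aWord_cons]

lemma sum_aWord (k : ℕ) : ∑ σ : Fin k → Fin 2, aWord σ = 2 ^ k / 2 := by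
  induction k with
  | zero => simp [aWord, Tcomp]
  | succ k ih =>
    rw [sum_comp_aWord_succ (M := ℝ) (fun x => x)]
    simp only [sum_add_distrib, ← sum_div, ih, sum_const, card_univ, Fintype.card_fun,
      Fintype.card_fin, nsmul_eq_mul]
    push_cast
    ring

lemma sum_aWord_sq (k : ℕ) :
    ∑ σ : Fin k → Fin 2, aWord σ ^ 2 = 2 ^ k * (3 * 9 ^ k - 1) / (8 * 9 ^ k) := by
  induction k with
  | zero => norm_num [aWord, Tcomp]
  | succ k ih =>
    have expand (x : ℝ) : (x / 3 + 2 / 3) ^ 2 = x ^ 2 / 9 + 4 / 9 * x + 4 / 9 := by ring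
    rw [sum_comp_aWord_succ (· ^ 2)]
    simp only [div_pow, expand, sum_add_distrib, ← sum_div, ← mul_sum, ih, sum_aWord, sum_const,
      card_univ, Fintype.card_fun, Fintype.card_fin, nsmul_eq_mul]
    push_cast
    field_simp
    ring

lemma range_aWord_succ (k : ℕ) :
    Set.range (aWord (k := k + 1))
      = Tmap 0 '' Set.range (aWord (k := k)) ∪ Tmap 1 '' Set.range (aWord (k := k)) := by
  ext x
  simp only [Set.mem_range, Set.mem_union, Set.mem_image]
  constructor
  · rintro ⟨σ, rfl⟩
    rw [aWord_eq_Tmap_aWord_tail]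
    rcases Fin.exists_fin_two.mp ⟨σ 0, rfl⟩ with h | h <;> rw [h]
    · exact .inl ⟨_, ⟨Fin.tail σ, rfl⟩, rfl⟩
    · exact .inr ⟨_, ⟨Fin.tail σ, rfl⟩, rfl⟩
  · rintro (⟨_, ⟨τ, rfl⟩, rfl⟩ | ⟨_, ⟨τ, rfl⟩, rfl⟩)
    · exact ⟨Fin.cons 0 τ, aWord_cons 0 τ⟩
    · exact ⟨Fin.cons 1 τ, aWord_cons 1 τ⟩

lemma range_aWord_eq_image_paperC (k : ℕ) :
    Set.range (aWord (k := k)) = (fun c : ℕ => (c : ℝ) / (2 * 3 ^ k)) '' (paperC k : Set ℕ) := by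
  induction k with
  | zero => simp [Set.range_unique, aWord, Tcomp, paperC]
  | succ k ih =>
    rw [range_aWord_succ, ih, paperC, coe_union, coe_image, Set.image_union, Set.image_image,
      Set.image_image, Set.image_image]
    congr 1 <;> refine Set.image_congr' fun c => ?_
    · rw [Tmap_zero]
      ring
    · rw [Tmap_one]
      push_cast
      field_simp
      ring

theorem correction_term (k : ℕ) :
    ((1 / 2 ^ (k + 1) : ℝ) * ∑ σ : Fin k → Fin 2, (aWord σ + 1 / 2 ^ k) ^ 2
      = (2 ^ k + 1) / (2 * 4 ^ k) + (3 * 9 ^ k - 1) / (16 * 9 ^ k)) ∧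
    (Set.range (fun σ : Fin k → Fin 2 => aWord σ)
      = (fun c : ℕ => (c : ℝ) / (2 * 3 ^ k)) '' (paperC k : Set ℕ)) := by
  refine ⟨?_, range_aWord_eq_image_paperC k⟩
  have expand (x : ℝ) : (x + 1 / 2 ^ k) ^ 2 = x ^ 2 + 2 / 2 ^ k * x + 1 / 4 ^ k := by
    rw [show (4 : ℝ) ^ k = (2 ^ k) ^ 2 by rw [← pow_mul, mul_comm, pow_mul]; norm_num]
    ring
  simp only [expand, sum_add_distrib, ← mul_sum, sum_aWord, sum_aWord_sq, sum_const, card_univ,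
    Fintype.card_fun, Fintype.card_fin, nsmul_eq_mul]
  rw [show (4 : ℝ) ^ k = 2 ^ k * 2 ^ k by rw [← mul_pow]; norm_num]
  push_cast
  field_simp
  ring
end

section
/- For n ≥ 2 let ℓ(n) be the unique natural number with 2^{ℓ(n)} ≤ n < 2^{ℓ(n)+1}, and let V_n be a nonincreasing sequence with V_{2^k} = (1/16)(2^{3−2k} + 2^{3−k} + 9^{−k} + 3) for all k. Then lim_{n→∞} (2·log n)/(−log(V_n − 3/16)) = 2. -/
open Filter

private lemma zpow_aux1 (k : ℕ) : (2:ℝ) ^ ((3:ℤ) - 2*k) = 8 / ((2:ℝ)^k)^2 := by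
  rw [zpow_sub₀ (by norm_num : (2:ℝ) ≠ 0)]
  rw [show (2*k : ℤ) = ((2*k : ℕ) : ℤ) by push_cast; ring, zpow_natCast, pow_mul', ← pow_mul]
  norm_num [pow_mul]

private lemma zpow_aux2 (k : ℕ) : (2:ℝ) ^ ((3:ℤ) - k) = 8 / (2:ℝ)^k := by
  rw [zpow_sub₀ (by norm_num : (2:ℝ) ≠ 0), zpow_natCast]
  norm_num

private lemma zpow_aux3 (k : ℕ) : (9:ℝ) ^ (-(k:ℤ)) = 1 / (9:ℝ)^k := by
  rw [zpow_neg, zpow_natCast]; norm_num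

private lemma natlog_tendsto : Tendsto (fun n : ℕ => (Nat.log 2 n : ℝ)) atTop atTop := by
  apply tendsto_natCast_atTop_atTop.comp
  apply Filter.tendsto_atTop_atTop.mpr
  intro b
  exact ⟨2^b, fun n hn => (Nat.log_pow (by norm_num) b).symm.trans_le (Nat.log_mono_right hn)⟩

private lemma lim_lower : Tendsto (fun x : ℝ => 2*x/(x+2)) atTop (nhds 2) := by
  have h : (fun x : ℝ => 2*x/(x+2)) =ᶠ[atTop] (fun x => 2 - 4/(x+2)) := by
    filter_upwards [eventually_gt_atTop (0:ℝ)] with x hx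
    field_simp
    ring
  rw [tendsto_congr' h]
  have h2 : Tendsto (fun x : ℝ => 4/(x+2)) atTop (nhds 0) :=
    Tendsto.div_atTop tendsto_const_nhds (tendsto_atTop_add_const_right _ 2 tendsto_id)
  simpa using tendsto_const_nhds.sub h2

private lemma lim_upper : Tendsto (fun x : ℝ =>
    (2*(x+1)*Real.log 2)/(x*Real.log 2 - Real.log (17/16))) atTop (nhds 2) := by
  have hl2 : (0:ℝ) < Real.log 2 := Real.log_pos (by norm_num)
  have hden : Tendsto (fun x : ℝ => x*Real.log 2 - Real.log (17/16)) atTop atTop :=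
    tendsto_atTop_add_const_right _ _ (tendsto_id.atTop_mul_const hl2)
  have h : (fun x : ℝ => (2*(x+1)*Real.log 2)/(x*Real.log 2 - Real.log (17/16)))
      =ᶠ[atTop] (fun x => 2 + (2*Real.log 2 + 2*Real.log (17/16))/(x*Real.log 2 - Real.log (17/16))) := by
    filter_upwards [hden.eventually_gt_atTop 0] with x hx
    field_simp
    ring
  rw [tendsto_congr' h]
  have h2 := Tendsto.div_atTop (tendsto_const_nhds (x := (2*Real.log 2 + 2*Real.log (17/16)))) hden
  simpa using tendsto_const_nhds.add h2

theorem constrained_quantization_dimension (V : ℕ → ℝ) (hmono : Antitone V)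
    (hV : ∀ k : ℕ, V (2 ^ k) = (1 / 16 : ℝ) * ((2 : ℝ) ^ ((3 : ℤ) - 2 * k)
      + (2 : ℝ) ^ ((3 : ℤ) - k) + (9 : ℝ) ^ (-(k : ℤ)) + 3)) :
    Tendsto (fun n : ℕ => (2 * Real.log n) / (-Real.log (V n - 3 / 16)))
      atTop (nhds 2) := by
  have hl2 : (0:ℝ) < Real.log 2 := Real.log_pos (by norm_num)
  have hc : Real.log (17/16) < Real.log 2 := Real.log_lt_log (by norm_num) (by norm_num)
  have hc0 : (0:ℝ) < Real.log (17/16) := Real.log_pos (by norm_num)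
  -- rewrite V (2^k) - 3/16
  have hVe : ∀ k : ℕ, V (2^k) - 3/16
      = 1/(2*(2:ℝ)^k) + (1/(2*((2:ℝ)^k)^2) + 1/(16*(9:ℝ)^k)) := by
    intro k
    rw [hV k, zpow_aux1, zpow_aux2, zpow_aux3]
    have ht : ((2:ℝ)^k) ≠ 0 := by positivity
    have h9 : ((9:ℝ)^k) ≠ 0 := by positivity
    field_simp
    ring
  have hfl : ∀ k : ℕ, 1/(2*(2:ℝ)^k) ≤ V (2^k) - 3/16 := by
    intro k
    rw [hVe k]
    have h1 : (0:ℝ) < 1/(2*((2:ℝ)^k)^2) := by positivity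
    have h2 : (0:ℝ) < 1/(16*(9:ℝ)^k) := by positivity
    linarith
  have hfu : ∀ k : ℕ, V (2^k) - 3/16 ≤ 17/(16*(2:ℝ)^k) := by
    intro k
    rw [hVe k]
    have ht1 : (1:ℝ) ≤ (2:ℝ)^k := one_le_pow₀ (by norm_num : (1:ℝ) ≤ 2)
    have h29 : (2:ℝ)^k ≤ (9:ℝ)^k := pow_le_pow_left₀ (by norm_num) (by norm_num) k
    have h1 : 1/(2*((2:ℝ)^k)^2) ≤ 1/(2*(2:ℝ)^k) :=
      one_div_le_one_div_of_le (by positivity) (by nlinarith)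
    have h2 : 1/(16*(9:ℝ)^k) ≤ 1/(16*(2:ℝ)^k) :=
      one_div_le_one_div_of_le (by positivity) (by nlinarith)
    have h3 : 1/(2*(2:ℝ)^k) + 1/(2*(2:ℝ)^k) + 1/(16*(2:ℝ)^k) = 17/(16*(2:ℝ)^k) := by
      have ht : ((2:ℝ)^k) ≠ 0 := by positivity
      field_simp
      ring
    linarith
  apply tendsto_of_tendsto_of_tendsto_of_le_of_le'
    (lim_lower.comp natlog_tendsto) (lim_upper.comp natlog_tendsto)
  · -- lower bound
    filter_upwards [eventually_ge_atTop 2] with n hn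
    simp only [Function.comp_apply]
    set ℓ := Nat.log 2 n with hℓdef
    have hℓ1 : 1 ≤ ℓ := Nat.log_pos (by norm_num) hn
    have hL1 : (1:ℝ) ≤ (ℓ:ℝ) := by exact_mod_cast hℓ1
    have h2n : 2^ℓ ≤ n := Nat.pow_log_le_self 2 (by omega)
    have h3n : n < 2^(ℓ+1) := Nat.lt_pow_succ_log_self (by norm_num) n
    have hr2 : (2:ℝ)^ℓ ≤ (n:ℝ) := by exact_mod_cast h2n
    have hr3 : (n:ℝ) ≤ (2:ℝ)^(ℓ+1) := by exact_mod_cast h3n.le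
    have hXl : 1/(2*(2:ℝ)^(ℓ+1)) ≤ V n - 3/16 := by
      have := hmono h3n.le
      linarith [hfl (ℓ+1)]
    have hX0 : (0:ℝ) < V n - 3/16 := lt_of_lt_of_le (by positivity) hXl
    have hD_hi : -Real.log (V n - 3/16) ≤ ((ℓ:ℝ)+2)*Real.log 2 := by
      have hlog := Real.log_le_log (by positivity) hXl
      have e2 : Real.log (1/(2*(2:ℝ)^(ℓ+1))) = -(((ℓ:ℝ)+2)*Real.log 2) := by
        rw [show (1/(2*(2:ℝ)^(ℓ+1))) = ((2:ℝ)^(ℓ+2))⁻¹ by rw [pow_succ, pow_succ]; ring,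
          Real.log_inv, Real.log_pow]
        push_cast; ring
      linarith [e2 ▸ hlog]
    have hXu : V n - 3/16 ≤ 17/(16*(2:ℝ)^ℓ) := by
      have := hmono h2n
      linarith [hfu ℓ]
    have hD_lo : (ℓ:ℝ)*Real.log 2 - Real.log (17/16) ≤ -Real.log (V n - 3/16) := by
      have hlog := Real.log_le_log hX0 hXu
      have e1 : Real.log (17/(16*(2:ℝ)^ℓ)) = Real.log (17/16) - (ℓ:ℝ)*Real.log 2 := by
        rw [show (17/(16*(2:ℝ)^ℓ)) = (17/16)/(2:ℝ)^ℓ by ring,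
          Real.log_div (by norm_num) (by positivity), Real.log_pow]
      linarith [e1 ▸ hlog]
    have hDpos : (0:ℝ) < -Real.log (V n - 3/16) := by nlinarith
    have hlogn_lo : (ℓ:ℝ)*Real.log 2 ≤ Real.log n := by
      have := Real.log_le_log (by positivity) hr2
      rwa [Real.log_pow] at this
    have e : 2*(ℓ:ℝ)/((ℓ:ℝ)+2) = (2*(ℓ:ℝ)*Real.log 2)/(((ℓ:ℝ)+2)*Real.log 2) :=
      (mul_div_mul_right _ _ hl2.ne').symm
    rw [e]
    apply div_le_div₀ (by nlinarith) (by nlinarith) hDpos hD_hi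
  · -- upper bound
    filter_upwards [eventually_ge_atTop 2] with n hn
    simp only [Function.comp_apply]
    set ℓ := Nat.log 2 n with hℓdef
    have hℓ1 : 1 ≤ ℓ := Nat.log_pos (by norm_num) hn
    have hL1 : (1:ℝ) ≤ (ℓ:ℝ) := by exact_mod_cast hℓ1
    have h2n : 2^ℓ ≤ n := Nat.pow_log_le_self 2 (by omega)
    have h3n : n < 2^(ℓ+1) := Nat.lt_pow_succ_log_self (by norm_num) n
    have hr3 : (n:ℝ) ≤ (2:ℝ)^(ℓ+1) := by exact_mod_cast h3n.le
    have hXl : 1/(2*(2:ℝ)^(ℓ+1)) ≤ V n - 3/16 := by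
      have := hmono h3n.le
      linarith [hfl (ℓ+1)]
    have hX0 : (0:ℝ) < V n - 3/16 := lt_of_lt_of_le (by positivity) hXl
    have hXu : V n - 3/16 ≤ 17/(16*(2:ℝ)^ℓ) := by
      have := hmono h2n
      linarith [hfu ℓ]
    have hD_lo : (ℓ:ℝ)*Real.log 2 - Real.log (17/16) ≤ -Real.log (V n - 3/16) := by
      have hlog := Real.log_le_log hX0 hXu
      have e1 : Real.log (17/(16*(2:ℝ)^ℓ)) = Real.log (17/16) - (ℓ:ℝ)*Real.log 2 := by
        rw [show (17/(16*(2:ℝ)^ℓ)) = (17/16)/(2:ℝ)^ℓ by ring,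
          Real.log_div (by norm_num) (by positivity), Real.log_pow]
      linarith [e1 ▸ hlog]
    have hdpos : (0:ℝ) < (ℓ:ℝ)*Real.log 2 - Real.log (17/16) := by nlinarith
    have hlogn_hi : Real.log n ≤ ((ℓ:ℝ)+1)*Real.log 2 := by
      have := Real.log_le_log (by positivity : (0:ℝ) < n) hr3
      rw [Real.log_pow] at this
      push_cast at this
      linarith
    apply div_le_div₀ (by positivity) (by nlinarith) hdpos hD_lo
end

section
/- For n ≥ 2 let ℓ(n) be the unique natural number with 2^{ℓ(n)} ≤ n < 2^{ℓ(n)+1}, and let V_n be a nonincreasing sequence with V_{2^k} = (1/16)(2^{3−2k} + 2^{3−k} + 9^{−k} + 3). Then lim_{n→∞} n²·(V_n − 3/16) = ∞. -/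
open Filter

theorem constrained_quantization_coefficient (V : ℕ → ℝ) (hmono : Antitone V)
    (hV : ∀ k : ℕ, V (2 ^ k) = (1 / 16 : ℝ) * ((2 : ℝ) ^ ((3 : ℤ) - 2 * k)
      + (2 : ℝ) ^ ((3 : ℤ) - k) + (9 : ℝ) ^ (-(k : ℤ)) + 3)) :
    Tendsto (fun n : ℕ => (n : ℝ) ^ 2 * (V n - 3 / 16)) atTop atTop := by
  have key : ∀ n : ℕ, 1 ≤ n → (n : ℝ) / 8 ≤ (n : ℝ) ^ 2 * (V n - 3 / 16) := by
    intro n hn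
    set k := Nat.log 2 n with hk
    have h1 : 2 ^ k ≤ n := Nat.pow_log_le_self 2 (by omega)
    have h2 : n < 2 ^ (k + 1) := Nat.lt_pow_succ_log_self (by norm_num) n
    have hVn : V (2 ^ (k + 1)) ≤ V n := hmono (le_of_lt h2)
    set c : ℝ := (2 : ℝ) ^ k with hc
    have hcpos : (0 : ℝ) < c := by positivity
    -- bound V n - 3/16 from below by 1/(4c)
    have hzpow : (2 : ℝ) ^ ((3 : ℤ) - (k + 1 : ℕ)) = 4 / c := by
      rw [zpow_sub₀ (by norm_num : (2:ℝ) ≠ 0), zpow_natCast, pow_succ]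
      rw [hc]
      norm_num
      field_simp
      ring
    have hVbound : 1 / (4 * c) ≤ V n - 3 / 16 := by
      have := hV (k + 1)
      have hrest : (0:ℝ) ≤ (2 : ℝ) ^ ((3 : ℤ) - 2 * (k+1 : ℕ)) + (9 : ℝ) ^ (-((k+1 : ℕ) : ℤ)) := by
        positivity
      have : (1 / 16 : ℝ) * ((2 : ℝ) ^ ((3 : ℤ) - (k + 1 : ℕ)) + 3) ≤ V (2 ^ (k + 1)) := by
        rw [this]; nlinarith
      rw [hzpow] at this
      have h4 : (1/16 : ℝ) * (4 / c + 3) - 3/16 = 1 / (4 * c) := by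
        field_simp; ring
      nlinarith [hVn]
    have hnle : (n : ℝ) ≤ 2 * c := by
      have : (n : ℝ) < (2:ℝ) ^ (k+1) := by
        exact_mod_cast h2
      rw [pow_succ] at this
      nlinarith
    have hcn : c ≤ (n : ℝ) := by rw [hc]; exact_mod_cast h1
    have hc2 : c ^ 2 ≤ (n : ℝ) ^ 2 := by nlinarith
    have hstep : c ^ 2 * (1 / (4 * c)) ≤ (n : ℝ) ^ 2 * (V n - 3 / 16) := by
      apply mul_le_mul hc2 hVbound (by positivity)
      positivity
    have hval : c ^ 2 * (1 / (4 * c)) = c / 4 := by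
      field_simp
    nlinarith
  have hlin : Tendsto (fun n : ℕ => (n : ℝ) / 8) atTop atTop :=
    (tendsto_natCast_atTop_atTop (R := ℝ)).atTop_div_const (by norm_num)
  refine tendsto_atTop_mono' atTop ?_ hlin
  filter_upwards [eventually_ge_atTop 1] with n hn using key n hn
end
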